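/- arXiv:2302.11452 — 3 statements merged into one kernel-verified Lean document; each statement's English description precedes it below -/
import Mathlib

section
/- Let A be a type and let α, β, γ, δ be setoids on A forming a pentagon N5. Form the duplication A(β) over β. Then in Setoid (A(β)): γ₀ ⊔ (α₀ ⊓ α₁) = α₀ and γ₁ ⊔ (α₀ ⊓ α₁) = α₁. -/
/-! Inside `A(β)` the diagonal `{(a, a)}` links any two `α₀`-related elements `x, y`: `x` is
`η₀`-related to `(x₀, x₀)`, which is `α₀ ⊓ α₁`-related to `(y₀, y₀)`, which is `η₀`-related to
`y`. So `η₀ ⊔ (α₀ ⊓ α₁) = α₀`, and `γ₀` is squeezed between `η₀` and `α₀` since `γ ≤ α`;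
the second coordinate is symmetric. -/

/-! Common setup: the lattice `Setoid A` of equivalence relations on `A`,
the duplication `Dup β = {p : A × A // β p.1 p.2}`, the lifted setoids
`lift0 β θ = θ₀`, `lift1 β θ = θ₁`, the projection kernels `ker0 β = η₀`,
`ker1 β = η₁`, and relational composition `rc`. -/

variable {A : Type*}

/-- The duplication `A(β)`. -/
def Dup (β : Setoid A) : Type _ := {p : A × A // β.r p.1 p.2}

/-- `θ₀`: relate two elements of `A(β)` iff `θ` relates their first coordinates. -/
def lift0 (β θ : Setoid A) : Setoid (Dup β) :=
  ⟨fun x y => θ.r x.1.1 y.1.1,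
   ⟨fun _ => θ.refl' _, fun h => θ.symm' h, fun h h' => θ.trans' h h'⟩⟩

/-- `θ₁`: relate two elements of `A(β)` iff `θ` relates their second coordinates. -/
def lift1 (β θ : Setoid A) : Setoid (Dup β) :=
  ⟨fun x y => θ.r x.1.2 y.1.2,
   ⟨fun _ => θ.refl' _, fun h => θ.symm' h, fun h h' => θ.trans' h h'⟩⟩

/-- `η₀`: kernel of the first projection. -/
def ker0 (β : Setoid A) : Setoid (Dup β) :=
  ⟨fun x y => x.1.1 = y.1.1, ⟨fun _ => rfl, Eq.symm, Eq.trans⟩⟩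

/-- `η₁`: kernel of the second projection. -/
def ker1 (β : Setoid A) : Setoid (Dup β) :=
  ⟨fun x y => x.1.2 = y.1.2, ⟨fun _ => rfl, Eq.symm, Eq.trans⟩⟩

/-- Relational composition. -/
def rc {B : Type*} (r s : B → B → Prop) : B → B → Prop :=
  fun a b => ∃ c, r a c ∧ s c b

/-- `α, β, γ, δ` form a pentagon `N₅` in `Setoid A`. -/
def IsN5 (α β γ δ : Setoid A) : Prop :=
  ⊥ < γ ∧ γ < α ∧ α < δ ∧ α ⊓ β = ⊥ ∧ γ ⊔ β = δ ∧ α ⊔ β = δ ∧ β ≠ ⊥ ∧ β ≠ δ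

section Duplication

variable (β : Setoid A)

def Dup.diag (a : A) : Dup β := ⟨(a, a), β.refl' a⟩

theorem ker0_le_lift0 (θ : Setoid A) : ker0 β ≤ lift0 β θ :=
  fun x _ (hxy : x.1.1 = _) => show θ _ _ from hxy ▸ θ.refl' x.1.1

theorem ker1_le_lift1 (θ : Setoid A) : ker1 β ≤ lift1 β θ :=
  fun x _ (hxy : x.1.2 = _) => show θ _ _ from hxy ▸ θ.refl' x.1.2

theorem lift0_mono : Monotone (lift0 β) := fun _ _ hθ _ _ hxy => hθ hxy

theorem lift1_mono : Monotone (lift1 β) := fun _ _ hθ _ _ hxy => hθ hxy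

theorem ker0_sup_lift0_inf_lift1 (α : Setoid A) :
    ker0 β ⊔ (lift0 β α ⊓ lift1 β α) = lift0 β α := by
  refine le_antisymm (sup_le (ker0_le_lift0 β α) inf_le_left) fun x y hxy => ?_
  have to_diag : (ker0 β ⊔ (lift0 β α ⊓ lift1 β α)) x (Dup.diag β x.1.1) :=
    le_sup_left (a := ker0 β) (Eq.refl x.1.1)
  have from_diag : (ker0 β ⊔ (lift0 β α ⊓ lift1 β α)) (Dup.diag β y.1.1) y :=
    le_sup_left (a := ker0 β) (Eq.refl y.1.1)
  have along_diag : (ker0 β ⊔ (lift0 β α ⊓ lift1 β α)) (Dup.diag β x.1.1) (Dup.diag β y.1.1) :=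
    le_sup_right (b := lift0 β α ⊓ lift1 β α) ⟨hxy, hxy⟩
  exact Setoid.trans' _ (Setoid.trans' _ to_diag along_diag) from_diag

theorem ker1_sup_lift0_inf_lift1 (α : Setoid A) :
    ker1 β ⊔ (lift0 β α ⊓ lift1 β α) = lift1 β α := by
  refine le_antisymm (sup_le (ker1_le_lift1 β α) inf_le_right) fun x y hxy => ?_
  have to_diag : (ker1 β ⊔ (lift0 β α ⊓ lift1 β α)) x (Dup.diag β x.1.2) :=
    le_sup_left (a := ker1 β) (Eq.refl x.1.2)
  have from_diag : (ker1 β ⊔ (lift0 β α ⊓ lift1 β α)) (Dup.diag β y.1.2) y :=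
    le_sup_left (a := ker1 β) (Eq.refl y.1.2)
  have along_diag : (ker1 β ⊔ (lift0 β α ⊓ lift1 β α)) (Dup.diag β x.1.2) (Dup.diag β y.1.2) :=
    le_sup_right (b := lift0 β α ⊓ lift1 β α) ⟨hxy, hxy⟩
  exact Setoid.trans' _ (Setoid.trans' _ to_diag along_diag) from_diag

variable {β}

theorem lift0_sup_lift0_inf_lift1 {θ α : Setoid A} (hθα : θ ≤ α) :
    lift0 β θ ⊔ (lift0 β α ⊓ lift1 β α) = lift0 β α :=
  le_antisymm (sup_le (lift0_mono β hθα) inf_le_left)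
    ((ker0_sup_lift0_inf_lift1 β α).ge.trans (sup_le_sup_right (ker0_le_lift0 β θ) _))

theorem lift1_sup_lift0_inf_lift1 {θ α : Setoid A} (hθα : θ ≤ α) :
    lift1 β θ ⊔ (lift0 β α ⊓ lift1 β α) = lift1 β α :=
  le_antisymm (sup_le (lift1_mono β hθα) inf_le_right)
    ((ker1_sup_lift0_inf_lift1 β α).ge.trans (sup_le_sup_right (ker1_le_lift1 β θ) _))

end Duplication

/-- Lemma 3.3(4). -/
theorem lemma1_part4 (α β γ δ : Setoid A) (h : IsN5 α β γ δ) :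
    lift0 β γ ⊔ (lift0 β α ⊓ lift1 β α) = lift0 β α ∧
    lift1 β γ ⊔ (lift0 β α ⊓ lift1 β α) = lift1 β α :=
  have hγα : γ ≤ α := h.2.1.le
  ⟨lift0_sup_lift0_inf_lift1 hγα, lift1_sup_lift0_inf_lift1 hγα⟩
end

section
/- Let A be a type and let α, β, γ, δ be setoids on A forming a pentagon N5. Form the duplication A(β) over β and assume that α₀ ⊓ γ₁ and γ₀ ⊓ α₁ are incomparable in Setoid (A(β)) (neither one is ≤ the other). Then (α₀ ⊓ γ₁) ⊔ (γ₀ ⊓ α₁) < α₀ ⊓ α₁. -/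
/-! Common setup: the lattice `Setoid A` of equivalence relations on `A`,
the duplication `Dup β = {p : A × A // β p.1 p.2}`, the lifted setoids
`lift0 β θ = θ₀`, `lift1 β θ = θ₁`, the projection kernels `ker0 β = η₀`,
`ker1 β = η₁`, and relational composition `rc`. -/

variable {A : Type*}

/-! Since `α ⊓ β = ⊥`, a point `(x, y)` of `A(β)` with `α x y` lies on the diagonal. Both
generators `α₀ ⊓ γ₁` and `γ₀ ⊓ α₁` of the join relate points whose coordinates are pairwise
`α`-related, so they never link a diagonal point to an off-diagonal one, and between diagonal
points they force `γ`. Hence the join lies below the kernel of "the `γ`-class of a diagonal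
point, `none` off the diagonal", whereas `α₀ ⊓ α₁` relates the diagonal points over any `a, b`
with `α a b` but not `γ a b`, which exist because `γ < α`. -/

namespace Dup

variable {β : Setoid A}

def diag_s5 (β : Setoid A) (a : A) : Dup β := ⟨(a, a), β.refl' a⟩

theorem fst_eq_snd_of_rel {α : Setoid A} (hαβ : α ⊓ β = ⊥) (z : Dup β)
    (h : α z.1.1 z.1.2) : z.1.1 = z.1.2 := by
  have hboth : (α ⊓ β) z.1.1 z.1.2 := Setoid.inf_iff_and.mpr ⟨h, z.2⟩
  rwa [hαβ] at hboth

theorem fst_eq_snd_iff_of_rel {α : Setoid A} (hαβ : α ⊓ β = ⊥) {z w : Dup β}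
    (h₀ : α z.1.1 w.1.1) (h₁ : α z.1.2 w.1.2) : z.1.1 = z.1.2 ↔ w.1.1 = w.1.2 := by
  constructor
  · intro hz
    refine fst_eq_snd_of_rel hαβ w (α.trans' (α.symm' h₀) ?_)
    rwa [hz]
  · intro hw
    refine fst_eq_snd_of_rel hαβ z (α.trans' h₀ ?_)
    rw [hw]
    exact α.symm' h₁

open Classical in
noncomputable def diagClass (γ : Setoid A) (z : Dup β) : Option (Quotient γ) :=
  if z.1.1 = z.1.2 then some (Quotient.mk γ z.1.1) else none

theorem diagClass_diag (γ : Setoid A) (a : A) :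
    diagClass γ (diag_s5 β a) = some (Quotient.mk γ a) :=
  if_pos rfl

theorem diagClass_eq_of_rel {α γ : Setoid A} (hαβ : α ⊓ β = ⊥) {z w : Dup β}
    (h₀ : α z.1.1 w.1.1) (h₁ : α z.1.2 w.1.2) (hγ : γ z.1.1 w.1.1 ∨ γ z.1.2 w.1.2) :
    diagClass γ z = diagClass γ w := by
  have hdiag := fst_eq_snd_iff_of_rel hαβ h₀ h₁
  by_cases hz : z.1.1 = z.1.2
  · have hw := hdiag.mp hz
    simp only [diagClass, if_pos hz, if_pos hw, Option.some.injEq]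
    refine Quotient.sound ?_
    rcases hγ with hγ | hγ
    · exact hγ
    · rwa [hz, hw]
  · simp only [diagClass, if_neg hz, if_neg (mt hdiag.mpr hz)]

end Dup

open Dup

theorem lift0_mono_s5 (β : Setoid A) {γ α : Setoid A} (h : γ ≤ α) : lift0 β γ ≤ lift0 β α :=
  fun _ _ hxy => h hxy

theorem lift1_mono_s5 (β : Setoid A) {γ α : Setoid A} (h : γ ≤ α) : lift1 β γ ≤ lift1 β α :=
  fun _ _ hxy => h hxy

theorem sup_lift_inf_lift_le_ker_diagClass {α β γ : Setoid A} (hγα : γ ≤ α)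
    (hαβ : α ⊓ β = ⊥) :
    (lift0 β α ⊓ lift1 β γ) ⊔ (lift0 β γ ⊓ lift1 β α) ≤ Setoid.ker (diagClass γ) := by
  refine sup_le (fun z w hzw => ?_) (fun z w hzw => ?_) <;>
    obtain ⟨h₀, h₁⟩ := Setoid.inf_iff_and.mp hzw
  · exact diagClass_eq_of_rel hαβ h₀ (hγα h₁) (Or.inr h₁)
  · exact diagClass_eq_of_rel hαβ (hγα h₀) h₁ (Or.inl h₀)

theorem lemma2_general (α β γ δ : Setoid A) (h : IsN5 α β γ δ) :
    (lift0 β α ⊓ lift1 β γ) ⊔ (lift0 β γ ⊓ lift1 β α) < lift0 β α ⊓ lift1 β α := by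
  obtain ⟨-, hγα, -, hαβ, -⟩ := h
  refine lt_of_le_not_ge (sup_le ?_ ?_) fun hge => ?_
  · exact inf_le_inf le_rfl (lift1_mono_s5 β hγα.le)
  · exact inf_le_inf (lift0_mono_s5 β hγα.le) le_rfl
  obtain ⟨a, b, hαab, hγab⟩ : ∃ a b, α a b ∧ ¬ γ a b := by
    simpa [Setoid.le_def] using hγα.not_ge
  have hdiag : (lift0 β α ⊓ lift1 β α) (diag_s5 β a) (diag_s5 β b) :=
    Setoid.inf_iff_and.mpr ⟨hαab, hαab⟩
  have hker := Setoid.ker_def.mp (sup_lift_inf_lift_le_ker_diagClass hγα.le hαβ (hge hdiag))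
  rw [diagClass_diag, diagClass_diag, Option.some.injEq] at hker
  exact hγab (Quotient.exact hker)

/-- Lemma 3.5. -/
theorem lemma2 (α β γ δ : Setoid A) (h : IsN5 α β γ δ)
    (hinc : ¬ (lift0 β α ⊓ lift1 β γ ≤ lift0 β γ ⊓ lift1 β α) ∧
      ¬ (lift0 β γ ⊓ lift1 β α ≤ lift0 β α ⊓ lift1 β γ)) :
    (lift0 β α ⊓ lift1 β γ) ⊔ (lift0 β γ ⊓ lift1 β α) < lift0 β α ⊓ lift1 β α :=
  lemma2_general α β γ δ h
end

section
/- Let A be a type and let α, β, γ, δ be setoids on A forming a diamond M3 with bottom ⊥, and assume the 3-permutability condition γ ⊔ β = γ∘β∘γ. Form the duplication A(γ) over γ. Then α₀ ⊓ β₁ ≠ ⊥ in Setoid (A(γ)), and consequently α₀ ⊓ β₁ and β₀ ⊓ α₁ are incomparable (neither one is ≤ the other). -/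
/-! Common setup: the lattice `Setoid A` of equivalence relations on `A`,
the duplication `Dup β = {p : A × A // β p.1 p.2}`, the lifted setoids
`lift0 β θ = θ₀`, `lift1 β θ = θ₁`, the projection kernels `ker0 β = η₀`,
`ker1 β = η₁`, and relational composition `rc`. -/

variable {A : Type*}

/-- `α, β, γ, δ` form a diamond `M₃` with bottom `⊥` in `Setoid A`. -/
def IsM3 (α β γ δ : Setoid A) : Prop :=
  α ⊓ β = ⊥ ∧ α ⊓ γ = ⊥ ∧ β ⊓ γ = ⊥ ∧
  α ⊔ β = δ ∧ α ⊔ γ = δ ∧ β ⊔ γ = δ ∧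
  α ≠ β ∧ α ≠ γ ∧ β ≠ γ ∧
  α ≠ ⊥ ∧ β ≠ ⊥ ∧ γ ≠ ⊥ ∧ α ≠ δ ∧ β ≠ δ ∧ γ ≠ δ

/-! Since `α ≠ ⊥`, pick `a ≠ b` with `α a b`. Then `δ = γ ⊔ β` relates `a` and `b`, so
3-permutability gives `γ a c`, `β c d`, `γ d b`. The pairs `(a, c)` and `(b, d)` lie in `A(γ)`
and are related by `α₀ ⊓ β₁` although they differ; they are not related by `β₀`, because
`α ⊓ β = ⊥`. Swapping coordinates in `A(γ)` exchanges `θ₀` and `θ₁`, which gives the other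
non-inclusion. -/

theorem Setoid.exists_rel_ne_of_ne_bot {θ : Setoid A} (hθ : θ ≠ ⊥) :
    ∃ a b, θ.r a b ∧ a ≠ b := by
  by_contra! h
  exact hθ (le_bot_iff.mp (Setoid.le_def.2 fun {a b} hab => h a b hab))

theorem Setoid.eq_of_rel_of_inf_eq_bot {θ θ' : Setoid A} (h : θ ⊓ θ' = ⊥) {a b : A}
    (ha : θ.r a b) (hb : θ'.r a b) : a = b := by
  have : (θ ⊓ θ').r a b := ⟨ha, hb⟩
  rwa [h] at this

theorem IsM3.le_sup {α β γ δ : Setoid A} (h : IsM3 α β γ δ) : α ≤ γ ⊔ β := by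
  obtain ⟨-, -, -, hαβ, -, hβγ, -⟩ := h
  rw [sup_comm, hβγ, ← hαβ]
  exact le_sup_left

namespace Dup

variable {γ : Setoid A}

def swap (x : Dup γ) : Dup γ := ⟨(x.1.2, x.1.1), γ.symm' x.2⟩

theorem lift0_inf_lift1_le_of_le_swap {θ θ' : Setoid A}
    (h : lift0 γ θ' ⊓ lift1 γ θ ≤ lift0 γ θ ⊓ lift1 γ θ') :
    lift0 γ θ ⊓ lift1 γ θ' ≤ lift0 γ θ' ⊓ lift1 γ θ := by
  intro x y hxy
  obtain ⟨h₁, h₀⟩ := h (x := x.swap) (y := y.swap) ⟨hxy.2, hxy.1⟩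
  exact ⟨h₀, h₁⟩

theorem exists_lift0_inf_lift1_rel_of_rc {θ θ' : Setoid A} {a b : A} (hθ : θ.r a b)
    (h : rc γ.r (rc θ'.r γ.r) a b) :
    ∃ x y : Dup γ, x.1.1 = a ∧ y.1.1 = b ∧ (lift0 γ θ ⊓ lift1 γ θ').r x y := by
  obtain ⟨c, hac, d, hcd, hdb⟩ := h
  exact ⟨⟨(a, c), hac⟩, ⟨(b, d), γ.symm' hdb⟩, rfl, rfl, hθ, hcd⟩

end Dup

/-- 3-permutability forces incomparability. -/
theorem three_permute_incomparable (α β γ δ : Setoid A) (h : IsM3 α β γ δ)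
    (h3 : (γ ⊔ β).r = rc γ.r (rc β.r γ.r)) :
    lift0 γ α ⊓ lift1 γ β ≠ ⊥ ∧
    ¬ (lift0 γ α ⊓ lift1 γ β ≤ lift0 γ β ⊓ lift1 γ α) ∧
    ¬ (lift0 γ β ⊓ lift1 γ α ≤ lift0 γ α ⊓ lift1 γ β) := by
  have hα_le := h.le_sup
  obtain ⟨hαβ, -, -, -, -, -, -, -, -, hα_ne_bot, -⟩ := h
  obtain ⟨a, b, hα, hne⟩ := Setoid.exists_rel_ne_of_ne_bot hα_ne_bot
  have hγβ : (γ ⊔ β).r a b := Setoid.le_def.1 hα_le hα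
  rw [h3] at hγβ
  obtain ⟨x, y, rfl, rfl, hxy⟩ := Dup.exists_lift0_inf_lift1_rel_of_rc hα hγβ
  have not_le : ¬ (lift0 γ α ⊓ lift1 γ β ≤ lift0 γ β ⊓ lift1 γ α) := fun hle =>
    hne (Setoid.eq_of_rel_of_inf_eq_bot hαβ hα (hle hxy).1)
  refine ⟨fun hbot => ?_, not_le, fun hle => not_le (Dup.lift0_inf_lift1_le_of_le_swap hle)⟩
  rw [hbot] at hxy
  exact hne (congrArg (fun z : Dup γ => z.1.1) hxy)
end
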